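/- Let G be a finite simple graph and let G̃ be its extension. Then G̃ is distance-hereditary if and only if G is a cograph. -/

import Mathlib

open scoped BigOperators

/-- A graph is distance-hereditary if every connected induced subgraph preserves distances. -/
def DistHereditary {V : Type*} (G : SimpleGraph V) : Prop :=
  ∀ (U : Set V), (G.induce U).Connected → ∀ u v : U, (G.induce U).dist u v = G.dist u.1 v.1

/-- A cograph is a graph with no induced path on four vertices. -/
def IsCograph {V : Type*} (G : SimpleGraph V) : Prop :=
  ¬ ∃ a b c d : V, [a, b, c, d].Nodup ∧
      G.Adj a b ∧ G.Adj b c ∧ G.Adj c d ∧ ¬G.Adj a c ∧ ¬G.Adj a d ∧ ¬G.Adj b d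

/-- The extension of `G`: add a new vertex `none` adjacent to every vertex of `G`. -/
def extGraph {V : Type*} (G : SimpleGraph V) : SimpleGraph (Option V) where
  Adj a b :=
    match a, b with
    | some u, some w => G.Adj u w
    | some _, none => True
    | none, some _ => True
    | none, none => False
  symm := by
    constructor
    rintro (_ | a) (_ | b) h
    · exact h
    · exact h
    · exact h
    · exact h.symm
  loopless := by
    constructor
    rintro (_ | a) h
    · exact h
    · exact G.irrefl h

/-!
In `extGraph G` two distinct non-adjacent vertices are always at distance two, through the new
vertex. Every connected induced subgraph of a cograph has diameter at most two: if `x` is at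
distance two from `v` through `m`, and a neighbour `u` of `x` were at distance three from `v`,
then `u x m v` would be an induced `P₄`. As adding a universal vertex to a cograph gives a
cograph, distances in the connected induced subgraphs of `extGraph G` are then 0, 1 or 2 exactly
as in `extGraph G`. Conversely, the ends of an induced `P₄` of `G` are at distance three in the
subgraph spanned by the path, but at distance two in `extGraph G`.
-/

open SimpleGraph

section

variable {V W : Type*} {G : SimpleGraph V}

namespace SimpleGraph

variable {u v w : V}

lemma dist_le_two_of_adj_of_adj (huw : G.Adj u w) (hwv : G.Adj w v) : G.dist u v ≤ 2 :=
  G.dist_le (.cons huw (.cons hwv .nil))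

lemma exists_adj_adj_of_dist_eq_two (h : G.dist u v = 2) : ∃ w, G.Adj u w ∧ G.Adj w v := by
  have hr : G.Reachable u v := Reachable.of_dist_ne_zero (by omega)
  have he : G.edist u v = 2 := by rw [← hr.coe_dist_eq_edist, h]; rfl
  obtain ⟨-, -, w, hw⟩ := edist_eq_two_iff.mp he
  exact ⟨w, (G.mem_commonNeighbors.mp hw).1, (G.mem_commonNeighbors.mp hw).2.symm⟩

end SimpleGraph

structure IsInducedP4 (G : SimpleGraph V) (a b c d : V) : Prop where
  adj_ab : G.Adj a b
  adj_bc : G.Adj b c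
  adj_cd : G.Adj c d
  not_adj_ac : ¬G.Adj a c
  not_adj_ad : ¬G.Adj a d
  not_adj_bd : ¬G.Adj b d

namespace IsInducedP4

variable {a b c d : V}

lemma ne_ac (h : IsInducedP4 G a b c d) : a ≠ c := by
  rintro rfl; exact h.not_adj_ad h.adj_cd

lemma ne_ad (h : IsInducedP4 G a b c d) : a ≠ d := by
  rintro rfl; exact h.not_adj_bd h.adj_ab.symm

lemma ne_bd (h : IsInducedP4 G a b c d) : b ≠ d := by
  rintro rfl; exact h.not_adj_ad h.adj_ab

lemma nodup (h : IsInducedP4 G a b c d) : [a, b, c, d].Nodup := by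
  simp [h.adj_ab.ne, h.adj_bc.ne, h.adj_cd.ne, h.ne_ac, h.ne_ad, h.ne_bd]

lemma ne_of_forall_adj (h : IsInducedP4 G a b c d) {w : V} (hw : ∀ x, x ≠ w → G.Adj w x) :
    a ≠ w ∧ b ≠ w ∧ c ≠ w ∧ d ≠ w := by
  refine ⟨?_, ?_, ?_, ?_⟩ <;> rintro rfl
  · exact h.not_adj_ac (hw c h.ne_ac.symm)
  · exact h.not_adj_bd (hw d h.ne_bd.symm)
  · exact h.not_adj_ac (hw a h.ne_ac).symm
  · exact h.not_adj_ad (hw a h.ne_ad).symm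

lemma dist_eq_three (h : IsInducedP4 G a b c d) (hnw : ∀ w, G.Adj a w → ¬G.Adj w d) :
    G.dist a d = 3 := by
  let p : G.Walk a d := .cons h.adj_ab (.cons h.adj_bc (.cons h.adj_cd .nil))
  have hr : G.Reachable a d := ⟨p⟩
  have h0 : G.dist a d ≠ 0 := fun h0 => h.ne_ad (hr.dist_eq_zero_iff.mp h0)
  have h1 : G.dist a d ≠ 1 := fun h1 => h.not_adj_ad (dist_eq_one_iff_adj.mp h1)
  have h2 : G.dist a d ≠ 2 := fun h2 => by
    obtain ⟨w, haw, hwd⟩ := exists_adj_adj_of_dist_eq_two h2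
    exact hnw w haw hwd
  have h3 : G.dist a d ≤ 3 := G.dist_le p
  omega

end IsInducedP4

lemma isInducedP4_map_iff {H : SimpleGraph W} (f : G ↪g H) {a b c d : V} :
    IsInducedP4 H (f a) (f b) (f c) (f d) ↔ IsInducedP4 G a b c d := by
  have e {x y : V} : H.Adj (f x) (f y) ↔ G.Adj x y := f.map_adj_iff
  exact ⟨fun ⟨h₁, h₂, h₃, h₄, h₅, h₆⟩ =>
      ⟨e.mp h₁, e.mp h₂, e.mp h₃, mt e.mpr h₄, mt e.mpr h₅, mt e.mpr h₆⟩,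
    fun ⟨h₁, h₂, h₃, h₄, h₅, h₆⟩ =>
      ⟨e.mpr h₁, e.mpr h₂, e.mpr h₃, mt e.mp h₄, mt e.mp h₅, mt e.mp h₆⟩⟩

lemma isCograph_iff : IsCograph G ↔ ∀ a b c d, ¬IsInducedP4 G a b c d :=
  ⟨fun hG a b c d h => hG ⟨a, b, c, d, h.nodup, h.1, h.2, h.3, h.4, h.5, h.6⟩,
    fun hG ⟨a, b, c, d, _, h₁, h₂, h₃, h₄, h₅, h₆⟩ =>
      hG a b c d ⟨h₁, h₂, h₃, h₄, h₅, h₆⟩⟩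

lemma IsCograph.of_embedding {H : SimpleGraph W} (hH : IsCograph H)
    (f : G ↪g H) : IsCograph G := by
  rw [isCograph_iff] at hH ⊢
  exact fun a b c d h => hH _ _ _ _ ((isInducedP4_map_iff f).mpr h)

lemma IsCograph.dist_le_two_of_adj (hG : IsCograph G) {u x v : V}
    (hux : G.Adj u x) (hxv : G.dist x v ≤ 2) : G.dist u v ≤ 2 := by
  rcases Nat.lt_or_eq_of_le hxv with hlt | h2
  · have := hux.reachable.dist_triangle_left v
    rw [dist_eq_one_iff_adj.mpr hux] at this
    omega
  · obtain ⟨m, hxm, hmv⟩ := exists_adj_adj_of_dist_eq_two h2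
    by_contra! h3
    have hxv : ¬G.Adj x v := fun h => by simp [dist_eq_one_iff_adj.mpr h] at h2
    refine isCograph_iff.mp hG u x m v ⟨hux, hxm, hmv, ?_, ?_, hxv⟩
    · exact fun hum => (dist_le_two_of_adj_of_adj hum hmv).not_gt h3
    · exact fun huv => by simp [dist_eq_one_iff_adj.mpr huv] at h3

lemma IsCograph.dist_le_two (hG : IsCograph G) {u v : V}
    (hr : G.Reachable u v) : G.dist u v ≤ 2 := by
  obtain ⟨p⟩ := hr
  induction p with
  | nil => simp
  | cons h _ ih => exact hG.dist_le_two_of_adj h ih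

lemma IsCograph.dist_eq_two (hG : IsCograph G) {u v : V}
    (hr : G.Reachable u v) (hne : u ≠ v) (hna : ¬G.Adj u v) : G.dist u v = 2 :=
  le_antisymm (hG.dist_le_two hr) (hr.one_lt_dist_of_ne_of_not_adj hne hna)

theorem IsCograph.distHereditary (hG : IsCograph G) : DistHereditary G := by
  intro U hU u v
  have hr : (G.induce U).Reachable u v := hU.preconnected u v
  by_cases huv : u = v
  · simp [huv]
  by_cases hadj : (G.induce U).Adj u v
  · exact (dist_eq_one_iff_adj.mpr hadj).trans (dist_eq_one_iff_adj (G := G).mpr hadj).symm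
  · exact ((hG.of_embedding (Embedding.induce U)).dist_eq_two hr huv hadj).trans
      (hG.dist_eq_two (hr.map (Embedding.induce U).toHom) (Subtype.coe_ne_coe.mpr huv) hadj).symm

theorem DistHereditary.dist_eq_three_of_isInducedP4 (hG : DistHereditary G)
    {a b c d : V} (h : IsInducedP4 G a b c d) : G.dist a d = 3 := by
  let p : G.Walk a d := .cons h.adj_ab (.cons h.adj_bc (.cons h.adj_cd .nil))
  let U : Set V := {x | x ∈ p.support}
  let A : U := ⟨a, by simp [U, p]⟩
  let B : U := ⟨b, by simp [U, p]⟩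
  let C : U := ⟨c, by simp [U, p]⟩
  let D : U := ⟨d, by simp [U, p]⟩
  have hU : IsInducedP4 (G.induce U) A B C D := (isInducedP4_map_iff (Embedding.induce U)).mp h
  rw [← hG U p.connected_induce_support A D]
  refine hU.dist_eq_three fun ⟨w, hw⟩ haw hwd => ?_
  simp only [U, p, Walk.support_cons, Walk.support_nil, Set.mem_ofPred_eq, List.mem_cons,
    List.not_mem_nil, or_false] at hw
  rcases hw with rfl | rfl | rfl | rfl
  · exact G.irrefl haw
  · exact h.not_adj_bd hwd
  · exact h.not_adj_ac haw
  · exact G.irrefl hwd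

lemma extGraph_adj_none {x : Option V} (hx : x ≠ none) :
    (extGraph G).Adj none x := by
  obtain ⟨y, rfl⟩ := Option.ne_none_iff_exists'.mp hx
  trivial

def extGraphEmbedding (G : SimpleGraph V) : G ↪g extGraph G :=
  ⟨Function.Embedding.some, Iff.rfl⟩

lemma isCograph_extGraph (hG : IsCograph G) : IsCograph (extGraph G) := by
  rw [isCograph_iff] at hG ⊢
  intro a b c d h
  obtain ⟨ha, hb, hc, hd⟩ := h.ne_of_forall_adj fun _ => extGraph_adj_none
  obtain ⟨a, rfl⟩ := Option.ne_none_iff_exists'.mp ha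
  obtain ⟨b, rfl⟩ := Option.ne_none_iff_exists'.mp hb
  obtain ⟨c, rfl⟩ := Option.ne_none_iff_exists'.mp hc
  obtain ⟨d, rfl⟩ := Option.ne_none_iff_exists'.mp hd
  exact hG a b c d ((isInducedP4_map_iff (extGraphEmbedding G)).mp h)

end

theorem stmt16_general {V : Type*} (G : SimpleGraph V) :
    DistHereditary (extGraph G) ↔ IsCograph G := by
  refine ⟨fun hG => isCograph_iff.mpr fun a b c d h => ?_,
    fun hG => (isCograph_extGraph hG).distHereditary⟩
  have h3 : (extGraph G).dist (some a) (some d) = 3 :=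
    hG.dist_eq_three_of_isInducedP4 ((isInducedP4_map_iff (extGraphEmbedding G)).mpr h)
  have h2 : (extGraph G).dist (some a) (some d) ≤ 2 :=
    dist_le_two_of_adj_of_adj (w := none) trivial trivial
  omega

theorem stmt16 {V : Type*} [Fintype V] (G : SimpleGraph V) :
    DistHereditary (extGraph G) ↔ IsCograph G :=
  stmt16_general G
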